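/- arXiv:math/9501210 — 2 statements merged into one kernel-verified Lean document; each statement's English description precedes it below -/
import Mathlib

section
/- Volume product of ℓₚⁿ balls: for 0 < p ≤ 1, s(B_{ℓₚⁿ}) = (|B_{ℓₚⁿ}|·|B_{ℓₚⁿ}°|)^(1/n) is comparable (with constants depending only on p) to n^(−1/p); equivalently s(B_{ℓₚⁿ}) ∼ s(B_{ℓ₂ⁿ})^(1/p). -/
open MeasureTheory Set Pointwise ENNReal

noncomputable section

/-- `B` is a `p`-ball in `ℝⁿ`: a compact symmetric `p`-convex set with `0` in its
interior. -/
def IsPBall (n : ℕ) (p : ℝ) (B : Set (Fin n → ℝ)) : Prop :=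
  IsCompact B ∧ B = -B ∧ (0 : Fin n → ℝ) ∈ interior B ∧
    ∀ x ∈ B, ∀ y ∈ B, ∀ l m : ℝ, 0 ≤ l → 0 ≤ m → l ^ p + m ^ p = 1 →
      l • x + m • y ∈ B

/-- The polar set `B° = {x : ⟨x,y⟩ ≤ 1 for all y ∈ B}`. -/
def polarSet (n : ℕ) (B : Set (Fin n → ℝ)) : Set (Fin n → ℝ) :=
  {x | ∀ y ∈ B, ∑ i, x i * y i ≤ 1}

/-- The Euclidean unit ball of `ℝⁿ`. -/
def euclBall (n : ℕ) : Set (Fin n → ℝ) := {x | ∑ i, x i ^ 2 ≤ 1}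

/-- The volume product `s(B) = (|B| · |B°|)^(1/n)`. -/
def sVol (n : ℕ) (B : Set (Fin n → ℝ)) : ℝ :=
  ((volume B).toReal * (volume (polarSet n B)).toReal) ^ ((1 : ℝ) / n)

/-- `M(B,D) = ((|B+D|/|B∩D|) · (|B°+D°|/|B°∩D°|))^(1/n)`. -/
def MVol (n : ℕ) (B D : Set (Fin n → ℝ)) : ℝ :=
  (((volume (B + D)).toReal / (volume (B ∩ D)).toReal) *
    ((volume (polarSet n B + polarSet n D)).toReal /
      (volume (polarSet n B ∩ polarSet n D)).toReal)) ^ ((1 : ℝ) / n)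

/-- `D` is a (centered) ellipsoid: a linear image of the Euclidean unit ball. -/
def IsEllipsoid (n : ℕ) (D : Set (Fin n → ℝ)) : Prop :=
  ∃ u : (Fin n → ℝ) ≃ₗ[ℝ] (Fin n → ℝ), D = u '' euclBall n

/-- The unit ball of `ℓₚⁿ`. -/
def lpBall (n : ℕ) (p : ℝ) : Set (Fin n → ℝ) := {x | ∑ i, |x i| ^ p ≤ 1}

/-! ### Auxiliary lemmas -/

theorem my_integrable_exp_neg_abs_rpow {p : ℝ} (hp : 0 < p) :
    Integrable fun t : ℝ => Real.exp (-(|t| ^ p)) := by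
  set k := ⌈2/p⌉₊ with hk
  have hkge : 2 ≤ p * k := by
    have h1 : 2/p ≤ (k:ℝ) := Nat.le_ceil _
    calc (2:ℝ) = p * (2/p) := by field_simp
      _ ≤ p * k := by nlinarith
  have hfact : (1:ℝ) ≤ (k.factorial : ℝ) := Nat.one_le_cast.mpr k.factorial_pos
  have hcont : Continuous fun t : ℝ => Real.exp (-(|t| ^ p)) :=
    Real.continuous_exp.comp (((Real.continuous_rpow_const hp.le).comp continuous_abs).neg)
  refine (integrable_inv_one_add_sq.const_mul (2 * k.factorial)).mono'
    hcont.aestronglyMeasurable (ae_of_all _ fun t => ?_)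
  have h2 : (0:ℝ) < 1 + t^2 := by positivity
  have hs0 : 0 ≤ |t| ^ p := Real.rpow_nonneg (abs_nonneg t) p
  rw [Real.norm_eq_abs, abs_of_pos (Real.exp_pos _), ← div_eq_mul_inv, le_div_iff₀ h2]
  rcases le_or_gt |t| 1 with h | h
  · have he : Real.exp (-(|t| ^ p)) ≤ 1 := Real.exp_le_one_iff.mpr (by linarith)
    have h3 : t^2 ≤ 1 := by nlinarith [abs_nonneg t, sq_abs t]
    nlinarith [Real.exp_pos (-(|t| ^ p))]
  · have ht1 : (1:ℝ) ≤ |t| := h.le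
    have hsq : t^2 ≤ |t| ^ (p * k) := by
      have : |t| ^ (2:ℝ) ≤ |t| ^ (p * k) :=
        Real.rpow_le_rpow_of_exponent_le ht1 hkge
      calc t^2 = |t| ^ (2:ℝ) := by
            rw [show ((2:ℝ)) = ((2:ℕ):ℝ) by norm_num, Real.rpow_natCast, sq_abs]
        _ ≤ _ := this
    have hexp : |t| ^ (p * k) ≤ k.factorial * Real.exp (|t| ^ p) := by
      have h4 : |t| ^ (p * k) = (|t| ^ p) ^ k := by
        rw [Real.rpow_mul (abs_nonneg t), Real.rpow_natCast]
      have h5 : (|t| ^ p) ^ k / k.factorial ≤ Real.exp (|t| ^ p) := by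
        calc (|t| ^ p) ^ k / k.factorial
            ≤ ∑ i ∈ Finset.range (k+1), (|t| ^ p) ^ i / i.factorial :=
              Finset.single_le_sum (f := fun i => (|t| ^ p) ^ i / (i.factorial : ℝ))
                (fun i _ => by positivity) (Finset.self_mem_range_succ k)
          _ ≤ _ := Real.sum_le_exp_of_nonneg hs0 _
      rw [h4]
      calc (|t| ^ p) ^ k = k.factorial * ((|t| ^ p) ^ k / k.factorial) := by
            field_simp
        _ ≤ _ := by
            have := mul_le_mul_of_nonneg_left h5 (by positivity : (0:ℝ) ≤ (k.factorial:ℝ))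
            linarith
    have hmain : 1 + t^2 ≤ 2 * k.factorial * Real.exp (|t| ^ p) := by
      have : (1:ℝ) ≤ t^2 := by nlinarith [sq_abs t, abs_nonneg t]
      nlinarith [Real.exp_pos (|t| ^ p)]
    calc Real.exp (-(|t| ^ p)) * (1 + t^2)
        ≤ Real.exp (-(|t| ^ p)) * (2 * k.factorial * Real.exp (|t| ^ p)) :=
          mul_le_mul_of_nonneg_left hmain (Real.exp_pos _).le
      _ = 2 * k.factorial * (Real.exp (-(|t| ^ p)) * Real.exp (|t| ^ p)) := by ring
      _ = 2 * k.factorial := by rw [← Real.exp_add]; simp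

theorem my_integral_exp_neg_mul_abs_rpow {p b : ℝ} (hp : 0 < p) (hb : 0 < b) :
    ∫ t : ℝ, Real.exp (-(b * |t| ^ p)) = b ^ (-(1:ℝ)/p) * (2 * Real.Gamma (1/p + 1)) := by
  simp_rw [← neg_mul]
  rw [integral_comp_abs (f := fun x => Real.exp (-b * x ^ p)), integral_exp_neg_mul_rpow hp hb]
  ring

theorem my_rpow_inv_natCast {x : ℝ} (hx : 0 ≤ x) {n : ℕ} (hn : 0 < n) :
    (x ^ n) ^ ((1:ℝ)/n) = x := by
  rw [← Real.rpow_natCast x n, ← Real.rpow_mul hx, mul_one_div,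
    div_self (by exact_mod_cast hn.ne'), Real.rpow_one]

/-- Membership in the `p`-ball forces coordinates into `[-1,1]`. -/
theorem my_abs_le_one_of_mem {n : ℕ} {p : ℝ} (hp : 0 < p) {x : Fin n → ℝ}
    (hx : x ∈ lpBall n p) (i : Fin n) : |x i| ≤ 1 := by
  have h1 : |x i| ^ p ≤ 1 :=
    le_trans (Finset.single_le_sum (f := fun j => |x j| ^ p)
      (fun j _ => Real.rpow_nonneg (abs_nonneg _) p) (Finset.mem_univ i)) hx
  by_contra h
  push_neg at h
  have : 1 < |x i| ^ p :=
    (Real.one_lt_rpow_iff_of_pos (by linarith)).mpr (Or.inl ⟨h, hp⟩)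
  linarith

theorem my_polar_lpBall {n : ℕ} {p : ℝ} (hp : 0 < p) (hp1 : p ≤ 1) :
    polarSet n (lpBall n p) = Set.pi univ (fun _ : Fin n => Icc (-1:ℝ) 1) := by
  have hsingle : ∀ (i : Fin n) (c : ℝ), |c| = 1 → Pi.single i c ∈ lpBall n p := by
    intro i c hc
    simp only [lpBall, Set.mem_setOf_eq]
    rw [Finset.sum_eq_single i
      (fun j _ hj => by rw [Pi.single_eq_of_ne hj, abs_zero, Real.zero_rpow hp.ne'])
      (fun h => absurd (Finset.mem_univ i) h)]
    rw [Pi.single_eq_same, hc, Real.one_rpow]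
  have hdot : ∀ (x : Fin n → ℝ) (i : Fin n) (c : ℝ),
      ∑ j, x j * (Pi.single i c : Fin n → ℝ) j = x i * c := by
    intro x i c
    rw [Finset.sum_eq_single i
      (fun j _ hj => by rw [Pi.single_eq_of_ne hj, mul_zero])
      (fun h => absurd (Finset.mem_univ i) h), Pi.single_eq_same]
  ext x
  simp only [Set.mem_univ_pi, Set.mem_Icc]
  constructor
  · intro hx i
    have h1 : x i * 1 ≤ 1 := by
      rw [← hdot x i 1]; exact hx _ (hsingle i 1 (by norm_num))
    have h2 : x i * (-1) ≤ 1 := by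
      rw [← hdot x i (-1)]; exact hx _ (hsingle i (-1) (by norm_num))
    constructor <;> linarith
  · intro hx y hy
    have habs : ∀ i, |y i| ≤ 1 := my_abs_le_one_of_mem hp hy
    calc ∑ i, x i * y i ≤ ∑ i, |y i| := by
          refine Finset.sum_le_sum fun i _ => ?_
          calc x i * y i ≤ |x i * y i| := le_abs_self _
            _ = |x i| * |y i| := abs_mul _ _
            _ ≤ 1 * |y i| := by
                have := abs_le.mpr ⟨(hx i).1, (hx i).2⟩
                exact mul_le_mul_of_nonneg_right this (abs_nonneg _)
            _ = |y i| := one_mul _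
      _ ≤ ∑ i, |y i| ^ p := by
          refine Finset.sum_le_sum fun i _ => ?_
          rcases eq_or_lt_of_le (abs_nonneg (y i)) with h | h
          · rw [← h, Real.zero_rpow hp.ne']
          · calc |y i| = |y i| ^ (1:ℝ) := (Real.rpow_one _).symm
              _ ≤ |y i| ^ p := Real.rpow_le_rpow_of_exponent_ge h (habs i) hp1
      _ ≤ 1 := hy

theorem my_volume_cube {n : ℕ} {a : ℝ} (ha : 0 ≤ a) :
    volume (Set.pi univ (fun _ : Fin n => Icc (-a) a)) = ENNReal.ofReal (2*a) ^ n := by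
  rw [volume_pi_pi]
  simp [Real.volume_Icc, two_mul]


/-- Volume product of `ℓₚⁿ` balls: for `0 < p ≤ 1`, `s(B_{ℓₚⁿ})` is comparable, with
constants depending only on `p`, to `n^(-1/p)`. -/
theorem sVol_lpBall (p : ℝ) (hp : 0 < p) (hp1 : p ≤ 1) :
    ∃ C : ℝ, 0 < C ∧ ∀ n : ℕ, 0 < n →
      C⁻¹ * (n : ℝ) ^ (-(1 : ℝ) / p) ≤ sVol n (lpBall n p) ∧
      sVol n (lpBall n p) ≤ C * (n : ℝ) ^ (-(1 : ℝ) / p) := by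
  set Γp := Real.Gamma (1/p + 1) with hΓp
  have hΓpos : 0 < Γp := Real.Gamma_pos_of_pos (by positivity)
  set C : ℝ := max (4 * Real.exp 1 * Γp) 1 with hC
  have hC1 : (1:ℝ) ≤ C := le_max_right _ _
  have hCpos : 0 < C := lt_of_lt_of_le one_pos hC1
  refine ⟨C, hCpos, fun n hn => ?_⟩
  have hnR : (0:ℝ) < n := Nat.cast_pos.mpr hn
  set a : ℝ := (n : ℝ) ^ (-(1 : ℝ) / p) with haDef
  have haPos : 0 < a := Real.rpow_pos_of_pos hnR _
  set B := lpBall n p with hB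
  -- B is contained in the unit cube, hence of finite volume
  have hBcube : B ⊆ Set.pi univ (fun _ : Fin n => Icc (-(1:ℝ)) 1) := by
    intro x hx
    rw [Set.mem_univ_pi]
    exact fun i => abs_le.mp (my_abs_le_one_of_mem hp hx i)
  have hBfin : volume B ≠ ⊤ := by
    refine ne_top_of_le_ne_top ?_ (measure_mono hBcube)
    rw [my_volume_cube (by norm_num : (0:ℝ) ≤ 1)]
    exact (ENNReal.pow_ne_top ENNReal.ofReal_ne_top)
  -- B is measurable
  have hBmeas : MeasurableSet B := by
    have hcont : Continuous fun x : Fin n → ℝ => ∑ i, |x i| ^ p := by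
      refine continuous_finset_sum _ fun i _ => ?_
      exact (Real.continuous_rpow_const hp.le).comp (continuous_abs.comp (continuous_apply i))
    exact (isClosed_le hcont continuous_const).measurableSet
  -- Lower bound on the volume: the cube of side 2a is inside B
  have hcubeB : Set.pi univ (fun _ : Fin n => Icc (-a) a) ⊆ B := by
    intro x hx
    rw [Set.mem_univ_pi] at hx
    show ∑ i, |x i| ^ p ≤ 1
    have hap : a ^ p = (n:ℝ)⁻¹ := by
      rw [haDef, ← Real.rpow_mul hnR.le,
        show (-(1:ℝ)/p) * p = -1 by field_simp, Real.rpow_neg_one]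
    calc ∑ i, |x i| ^ p ≤ ∑ _i : Fin n, (n:ℝ)⁻¹ := by
          refine Finset.sum_le_sum fun i _ => ?_
          rw [← hap]
          have : |x i| ≤ a := abs_le.mpr ⟨(hx i).1, (hx i).2⟩
          exact Real.rpow_le_rpow (abs_nonneg _) this hp.le
      _ = 1 := by
          rw [Finset.sum_const, Finset.card_univ, Fintype.card_fin, nsmul_eq_mul]
          field_simp
  have hVlow : (2*a)^n ≤ (volume B).toReal := by
    have h1 : volume (Set.pi univ (fun _ : Fin n => Icc (-a) a)) ≤ volume B :=
      measure_mono hcubeB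
    have h2 := ENNReal.toReal_mono hBfin h1
    rwa [my_volume_cube haPos.le, ENNReal.toReal_pow,
      ENNReal.toReal_ofReal (by positivity)] at h2
  -- Upper bound on the volume via a Laplace-transform argument
  set f : ℝ → ℝ := fun t => Real.exp 1 * Real.exp (-((n:ℝ) * |t| ^ p)) with hf
  have hf_int : Integrable f := by
    refine ((my_integrable_exp_neg_abs_rpow hp).mono' ?_ (ae_of_all _ fun t => ?_)).const_mul _
    · exact (Real.continuous_exp.comp ((continuous_const.mul
        ((Real.continuous_rpow_const hp.le).comp continuous_abs)).neg)).aestronglyMeasurable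
    · rw [Real.norm_eq_abs, abs_of_pos (Real.exp_pos _)]
      refine Real.exp_le_exp.mpr ?_
      have h0 : 0 ≤ |t| ^ p := Real.rpow_nonneg (abs_nonneg _) _
      have h1 : (1:ℝ) ≤ (n:ℝ) := by exact_mod_cast hn
      nlinarith
  have hf_val : ∫ t : ℝ, f t = Real.exp 1 * (a * (2 * Γp)) := by
    rw [hf]
    rw [integral_const_mul]
    rw [my_integral_exp_neg_mul_abs_rpow hp hnR]
  have hf_nonneg : ∀ t, 0 ≤ f t := fun t => by positivity
  set F : (Fin n → ℝ) → ℝ := fun x => ∏ i, f (x i) with hF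
  have hF_int : Integrable F := Integrable.fintype_prod (f := fun _ : Fin n => f) fun _ => hf_int
  have hF_one : ∀ x ∈ B, 1 ≤ F x := by
    intro x hx
    have hFx : F x = Real.exp (∑ i : Fin n, (1 + -((n:ℝ) * |x i| ^ p))) := by
      rw [hF, Real.exp_sum]
      exact Finset.prod_congr rfl fun i _ => by rw [Real.exp_add]
    rw [hFx]
    refine Real.one_le_exp ?_
    have hsum : ∑ i : Fin n, (1 + -((n:ℝ) * |x i| ^ p))
        = (n:ℝ) * (1 - ∑ i, |x i| ^ p) := by
      rw [Finset.sum_add_distrib, Finset.sum_const, Finset.card_univ, Fintype.card_fin,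
        nsmul_eq_mul, mul_one, Finset.sum_neg_distrib, ← Finset.mul_sum]
      ring
    rw [hsum]
    have : ∑ i, |x i| ^ p ≤ 1 := hx
    nlinarith
  have hVup : (volume B).toReal ≤ (Real.exp 1 * (a * (2 * Γp)))^n := by
    have hconst : IntegrableOn (fun _ : Fin n → ℝ => (1:ℝ)) B := by
      rw [integrableOn_const_iff (by simp)]
      exact Or.inr (lt_top_iff_ne_top.mpr hBfin)
    have h1 : (volume B).toReal = ∫ _x in B, (1:ℝ) := by
      rw [setIntegral_const, smul_eq_mul, mul_one]; rfl
    have h2 : ∫ _x in B, (1:ℝ) ≤ ∫ x in B, F x :=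
      setIntegral_mono_on hconst (hF_int.integrableOn) hBmeas hF_one
    have h3 : ∫ x in B, F x ≤ ∫ x, F x :=
      setIntegral_le_integral hF_int (ae_of_all _ fun x => by
        exact Finset.prod_nonneg fun i _ => hf_nonneg _)
    have h4 : ∫ x, F x = (Real.exp 1 * (a * (2 * Γp)))^n := by
      rw [hF]
      exact (integral_fintype_prod_eq_pow (ι := Fin n) f (μ := volume)).trans (by rw [hf_val, Fintype.card_fin])
    linarith
  -- Volume of the polar body
  have hPvol : (volume (polarSet n B)).toReal = 2^n := by
    rw [hB, my_polar_lpBall hp hp1,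
      show (fun _ : Fin n => Icc (-1:ℝ) 1) = fun _ : Fin n => Icc (-(1:ℝ)) 1 by norm_num,
      my_volume_cube (by norm_num : (0:ℝ) ≤ 1), ENNReal.toReal_pow,
      ENNReal.toReal_ofReal (by norm_num)]
    norm_num
  -- Put everything together
  have hVnonneg : (0:ℝ) ≤ (volume B).toReal := ENNReal.toReal_nonneg
  have hs : sVol n B = ((volume B).toReal * 2^n) ^ ((1:ℝ)/n) := by
    rw [sVol, hPvol]
  constructor
  · -- lower bound
    have h1 : (4*a)^n ≤ (volume B).toReal * 2^n := by
      calc (4*a)^n = (2*a)^n * 2^n := by rw [← mul_pow]; ring_nf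
        _ ≤ (volume B).toReal * 2^n := by
            exact mul_le_mul_of_nonneg_right hVlow (by positivity)
    have h2 : 4*a ≤ sVol n B := by
      rw [hs, ← my_rpow_inv_natCast (x := 4*a) (by positivity) hn]
      exact Real.rpow_le_rpow (by positivity) h1 (by positivity)
    have h3 : C⁻¹ * a ≤ 4 * a := by
      have : C⁻¹ ≤ 1 := inv_le_one_of_one_le₀ hC1
      nlinarith
    linarith
  · -- upper bound
    have h1 : (volume B).toReal * 2^n ≤ (2 * (Real.exp 1 * (a * (2 * Γp))))^n := by
      calc (volume B).toReal * 2^n ≤ (Real.exp 1 * (a * (2 * Γp)))^n * 2^n :=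
            mul_le_mul_of_nonneg_right hVup (by positivity)
        _ = (2 * (Real.exp 1 * (a * (2 * Γp))))^n := by rw [← mul_pow]; ring_nf
    have h2 : sVol n B ≤ 2 * (Real.exp 1 * (a * (2 * Γp))) := by
      rw [hs, ← my_rpow_inv_natCast (x := 2 * (Real.exp 1 * (a * (2 * Γp)))) (by positivity) hn]
      exact Real.rpow_le_rpow (by positivity) h1 (by positivity)
    have h3 : 2 * (Real.exp 1 * (a * (2 * Γp))) ≤ C * a := by
      have h4 : 4 * Real.exp 1 * Γp ≤ C := le_max_left _ _
      have : 2 * (Real.exp 1 * (a * (2 * Γp))) = (4 * Real.exp 1 * Γp) * a := by ring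
      rw [this]
      exact mul_le_mul_of_nonneg_right h4 haPos.le
    linarith


end
end

section
/- Reverse Brunn–Minkowski for p-balls (Milman-type, conditional form): fix 0 < p ≤ 1 and suppose that there is a constant C₀(p) such that for every n and every p-ball B ⊆ ℝⁿ there is an ellipsoid D with |B| = |D| and covering number bounds N(B, D) ≤ C₀ⁿ and N(D, B) ≤ C₀ⁿ. Then there exists C = C(p) such that for all n and all p-balls B₁, B₂ ⊆ ℝⁿ there is a volume-preserving linear map u : ℝⁿ → ℝⁿ with |u(B₁) + B₂|^(1/n) ≤ C(|B₁|^(1/n) + |B₂|^(1/n)). -/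
open MeasureTheory Set Pointwise ENNReal

noncomputable section

/-- The translative covering number `N(A, B)`. -/
def covN {X : Type*} [AddCommGroup X] (A B : Set X) : ℕ∞ :=
  ⨅ (t : Finset X) (_ : A ⊆ ⋃ x ∈ t, x +ᵥ B), (t.card : ℕ∞)

/-! ### Auxiliary lemmas -/

lemma cover_vol {n : ℕ} {A B : Set (Fin n → ℝ)} (Δ : Set (Fin n → ℝ)) (t : Finset (Fin n → ℝ))
    (ht : A ⊆ ⋃ x ∈ t, x +ᵥ B) :
    volume (A + Δ) ≤ (t.card : ℝ≥0∞) * volume (B + Δ) := by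
  have hsub : A + Δ ⊆ ⋃ x ∈ t, x +ᵥ (B + Δ) := by
    rintro z ⟨a, ha, d, hd, rfl⟩
    have := ht ha
    simp only [Set.mem_iUnion] at this ⊢
    obtain ⟨x, hx, hax⟩ := this
    obtain ⟨b, hb, rfl⟩ := hax
    exact ⟨x, hx, b + d, ⟨b, hb, d, hd, rfl⟩, (add_assoc _ _ _).symm⟩
  calc volume (A + Δ) ≤ ∑ x ∈ t, volume (x +ᵥ (B + Δ)) :=
        (measure_mono hsub).trans (measure_biUnion_finset_le _ _)
    _ = (t.card : ℝ≥0∞) * volume (B + Δ) := by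
        simp [measure_vadd, Finset.sum_const, nsmul_eq_mul]

lemma covN_extract {X : Type*} [AddCommGroup X] {A B : Set X} {r : ℝ}
    (h : (covN A B : ℝ≥0∞) ≤ ENNReal.ofReal r) :
    ∃ t : Finset X, (A ⊆ ⋃ x ∈ t, x +ᵥ B) ∧ ((t.card : ℝ≥0∞) ≤ ENNReal.ofReal r) := by
  have hne : ∃ t : Finset X, A ⊆ ⋃ x ∈ t, x +ᵥ B := by
    by_contra hc
    push_neg at hc
    have htop : covN A B = ⊤ := by
      rw [covN]
      simp only [iInf_eq_top]
      intro t ht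
      exact absurd ht (hc t)
    rw [htop] at h
    simp only [ENat.toENNReal_top, top_le_iff] at h
    exact ENNReal.ofReal_ne_top h
  have hS : {k : ℕ | ∃ t : Finset X, (A ⊆ ⋃ x ∈ t, x +ᵥ B) ∧ t.card = k}.Nonempty := by
    obtain ⟨t, ht⟩ := hne
    exact ⟨t.card, t, ht, rfl⟩
  obtain ⟨t, ht, htc⟩ := Nat.sInf_mem hS
  refine ⟨t, ht, le_trans ?_ h⟩
  have h1 : ((t.card : ℕ∞)) ≤ covN A B := by
    rw [covN]
    refine le_iInf₂ fun t' ht' => ?_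
    have : t.card ≤ t'.card := htc ▸ Nat.sInf_le ⟨t', ht', rfl⟩
    exact_mod_cast this
  exact_mod_cast h1

lemma euclBall_convex (n : ℕ) : Convex ℝ (euclBall n) := by
  intro x hx y hy a b ha hb hab
  have key : ∀ i : Fin n, (a * x i + b * y i) ^ 2 ≤ a * x i ^ 2 + b * y i ^ 2 := by
    intro i
    have := (Even.convexOn_pow (even_two)).2 (Set.mem_univ (x i)) (Set.mem_univ (y i)) ha hb hab
    simpa [smul_eq_mul] using this
  have hx' : ∑ i, x i ^ 2 ≤ 1 := hx
  have hy' : ∑ i, y i ^ 2 ≤ 1 := hy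
  show ∑ i, (a • x + b • y) i ^ 2 ≤ 1
  calc ∑ i, (a • x + b • y) i ^ 2 = ∑ i, (a * x i + b * y i) ^ 2 := by
        simp [Pi.add_apply, Pi.smul_apply, smul_eq_mul]
    _ ≤ ∑ i, (a * x i ^ 2 + b * y i ^ 2) := Finset.sum_le_sum fun i _ => key i
    _ = a * ∑ i, x i ^ 2 + b * ∑ i, y i ^ 2 := by
        rw [Finset.sum_add_distrib, Finset.mul_sum, Finset.mul_sum]
    _ ≤ a * 1 + b * 1 := add_le_add (mul_le_mul_of_nonneg_left hx' ha)
        (mul_le_mul_of_nonneg_left hy' hb)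
    _ = 1 := by rw [mul_one, mul_one, hab]

lemma euclBall_vol_pos {n : ℕ} (hn : 0 < n) : 0 < volume (euclBall n) := by
  have hsub : Metric.ball (0 : Fin n → ℝ) (n : ℝ)⁻¹ ⊆ euclBall n := by
    intro x hx
    have hxn : ‖x‖ < (n : ℝ)⁻¹ := by simpa using hx
    have hxi : ∀ i : Fin n, x i ^ 2 ≤ ((n : ℝ)⁻¹) ^ 2 := by
      intro i
      have h1 : |x i| ≤ (n : ℝ)⁻¹ := (norm_le_pi_norm x i).trans hxn.le
      calc x i ^ 2 = |x i| ^ 2 := (sq_abs _).symm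
        _ ≤ ((n : ℝ)⁻¹) ^ 2 := pow_le_pow_left₀ (abs_nonneg _) h1 2
    show ∑ i, x i ^ 2 ≤ 1
    calc ∑ i, x i ^ 2 ≤ ∑ _i : Fin n, ((n : ℝ)⁻¹) ^ 2 :=
          Finset.sum_le_sum fun i _ => hxi i
      _ = n * ((n : ℝ)⁻¹) ^ 2 := by simp [mul_comm]
      _ = (n : ℝ)⁻¹ := by
          field_simp
      _ ≤ 1 := by
          rw [inv_le_one_iff₀]
          right; exact_mod_cast hn
  exact lt_of_lt_of_le (Metric.measure_ball_pos volume 0 (by positivity)) (measure_mono hsub)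

lemma euclBall_vol_lt_top (n : ℕ) : volume (euclBall n) < ⊤ := by
  have hsub : euclBall n ⊆ Metric.closedBall (0 : Fin n → ℝ) 1 := by
    intro x hx
    have hx' : ∑ i, x i ^ 2 ≤ 1 := hx
    rw [Metric.mem_closedBall, dist_zero_right]
    refine (pi_norm_le_iff_of_nonneg zero_le_one).2 fun i => ?_
    have h1 : x i ^ 2 ≤ 1 := by
      refine le_trans ?_ hx'
      exact Finset.single_le_sum (fun j _ => sq_nonneg (x j)) (Finset.mem_univ i)
    have h2 : |x i| ^ 2 ≤ 1 ^ 2 := by simpa [sq_abs] using h1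
    calc ‖x i‖ = |x i| := rfl
      _ ≤ 1 := by nlinarith [abs_nonneg (x i)]
  exact lt_of_le_of_lt (measure_mono hsub) measure_closedBall_lt_top

lemma vol_image {n : ℕ} (e : (Fin n → ℝ) ≃ₗ[ℝ] (Fin n → ℝ)) (s : Set (Fin n → ℝ)) :
    volume (⇑e '' s) = ENNReal.ofReal |e.toLinearMap.det| * volume s := by
  have := MeasureTheory.Measure.addHaar_image_linearMap
    (volume : Measure (Fin n → ℝ)) e.toLinearMap s
  simpa using this

lemma vol_smul {n : ℕ} (r : ℝ) (s : Set (Fin n → ℝ)) :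
    volume (r • s) = ENNReal.ofReal |r ^ n| * volume s := by
  have := MeasureTheory.Measure.addHaar_smul (volume : Measure (Fin n → ℝ)) r s
  simpa using this

lemma det_symm_aux {n : ℕ} (w : (Fin n → ℝ) ≃ₗ[ℝ] (Fin n → ℝ)) :
    w.symm.toLinearMap.det = (w.toLinearMap.det)⁻¹ := by
  have h : w.symm.toLinearMap ∘ₗ w.toLinearMap = LinearMap.id := by
    ext x; simp
  have h2 := LinearMap.det_comp w.symm.toLinearMap w.toLinearMap
  rw [h, LinearMap.det_id] at h2
  exact eq_inv_of_mul_eq_one_left h2.symm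

lemma det_smul_aux {n : ℕ} (α : ℝ) (hα : α ≠ 0) :
    (LinearEquiv.smulOfNeZero ℝ (Fin n → ℝ) α hα).toLinearMap.det = α ^ n := by
  have h : (LinearEquiv.smulOfNeZero ℝ (Fin n → ℝ) α hα).toLinearMap
      = α • (LinearMap.id : (Fin n → ℝ) →ₗ[ℝ] (Fin n → ℝ)) := LinearMap.ext fun x => rfl
  rw [h, LinearMap.det_smul, LinearMap.det_id, mul_one]
  simp

/-- Reverse Brunn–Minkowski for `p`-balls (conditional form): if every `p`-ball `B ⊆ ℝⁿ`
admits an ellipsoid `D` of the same volume with `N(B,D) ≤ C₀ⁿ` and `N(D,B) ≤ C₀ⁿ`, then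
there is `C = C(p)` such that for all `p`-balls `B₁, B₂ ⊆ ℝⁿ` there is a volume-preserving
linear map `u` with `|u(B₁) + B₂|^(1/n) ≤ C (|B₁|^(1/n) + |B₂|^(1/n))`. -/
theorem reverse_brunn_minkowski_pBalls (p : ℝ) (hp : 0 < p) (hp1 : p ≤ 1)
    (hMil : ∃ C₀ : ℝ, 1 ≤ C₀ ∧ ∀ n : ℕ, 0 < n → ∀ B : Set (Fin n → ℝ), IsPBall n p B →
      ∃ D : Set (Fin n → ℝ), IsEllipsoid n D ∧ volume B = volume D ∧
        (covN B D : ℝ≥0∞) ≤ ENNReal.ofReal (C₀ ^ n) ∧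
        (covN D B : ℝ≥0∞) ≤ ENNReal.ofReal (C₀ ^ n)) :
    ∃ C : ℝ, 0 < C ∧ ∀ n : ℕ, 0 < n → ∀ B₁ B₂ : Set (Fin n → ℝ),
      IsPBall n p B₁ → IsPBall n p B₂ →
      ∃ u : (Fin n → ℝ) ≃ₗ[ℝ] (Fin n → ℝ),
        |LinearMap.det u.toLinearMap| = 1 ∧
        (volume ((u '' B₁) + B₂)).toReal ^ ((1 : ℝ) / n) ≤
          C * ((volume B₁).toReal ^ ((1 : ℝ) / n) + (volume B₂).toReal ^ ((1 : ℝ) / n)) := by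
  obtain ⟨C₀, hC₀, hmain⟩ := hMil
  have hC₀pos : (0 : ℝ) < C₀ := lt_of_lt_of_le one_pos hC₀
  refine ⟨C₀ ^ 2, by positivity, ?_⟩
  intro n hn B₁ B₂ hB₁ hB₂
  obtain ⟨D₁, ⟨w, rfl⟩, hvol₁, hN₁, -⟩ := hmain n hn B₁ hB₁
  obtain ⟨D₂, ⟨v, rfl⟩, hvol₂, hN₂, -⟩ := hmain n hn B₂ hB₂
  set E := euclBall n with hEdef
  have hE0 : 0 < volume E := euclBall_vol_pos hn
  have hET : volume E ≠ ⊤ := (euclBall_vol_lt_top n).ne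
  set eR := (volume E).toReal with heRdef
  have heR0 : 0 < eR := ENNReal.toReal_pos hE0.ne' hET
  have hb₁0 : 0 < volume B₁ :=
    Measure.measure_pos_of_nonempty_interior _ ⟨0, hB₁.2.2.1⟩
  have hb₁T : volume B₁ ≠ ⊤ := hB₁.1.measure_lt_top.ne
  have hb₂0 : 0 < volume B₂ :=
    Measure.measure_pos_of_nonempty_interior _ ⟨0, hB₂.2.2.1⟩
  have hb₂T : volume B₂ ≠ ⊤ := hB₂.1.measure_lt_top.ne
  set a₁ := (volume B₁).toReal with ha₁def
  set a₂ := (volume B₂).toReal with ha₂def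
  have ha₁0 : 0 < a₁ := ENNReal.toReal_pos hb₁0.ne' hb₁T
  have ha₂0 : 0 < a₂ := ENNReal.toReal_pos hb₂0.ne' hb₂T
  set dw := |w.toLinearMap.det| with hdwdef
  set dv := |v.toLinearMap.det| with hdvdef
  have hw : volume B₁ = ENNReal.ofReal dw * volume E := by rw [hvol₁, vol_image]
  have hv : volume B₂ = ENNReal.ofReal dv * volume E := by rw [hvol₂, vol_image]
  have ha₁ : a₁ = dw * eR := by
    rw [ha₁def, hw, ENNReal.toReal_mul, ENNReal.toReal_ofReal (abs_nonneg _)]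
  have ha₂ : a₂ = dv * eR := by
    rw [ha₂def, hv, ENNReal.toReal_mul, ENNReal.toReal_ofReal (abs_nonneg _)]
  have hdw0 : 0 < dw := by nlinarith
  have hdv0 : 0 < dv := by nlinarith
  -- the dilation factor
  set α := (a₁ / a₂) ^ ((n : ℝ))⁻¹ with hαdef
  have hα0 : 0 < α := Real.rpow_pos_of_pos (div_pos ha₁0 ha₂0) _
  have hαn : α ^ n = a₁ / a₂ :=
    Real.rpow_inv_natCast_pow (div_pos ha₁0 ha₂0).le hn.ne'
  set σ := LinearEquiv.smulOfNeZero ℝ (Fin n → ℝ) α hα0.ne' with hσdef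
  set u := w.symm ≪≫ₗ (σ ≪≫ₗ v) with hudef
  refine ⟨u, ?_, ?_⟩
  · -- determinant computation
    have h1 : u.toLinearMap = (σ ≪≫ₗ v).toLinearMap ∘ₗ w.symm.toLinearMap := rfl
    have h2 : (σ ≪≫ₗ v).toLinearMap = v.toLinearMap ∘ₗ σ.toLinearMap := rfl
    rw [h1, LinearMap.det_comp, h2, LinearMap.det_comp, det_smul_aux, det_symm_aux,
      abs_mul, abs_mul, abs_inv]
    have hαabs : |α ^ n| = a₁ / a₂ := by
      rw [abs_of_nonneg (by positivity), hαn]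
    rw [hαabs, ← hdvdef, ← hdwdef]
    have hdw' : dw = a₁ / eR := by field_simp [ha₁]; exact ha₁.symm
    have hdv' : dv = a₂ / eR := by field_simp [ha₂]; exact ha₂.symm
    rw [hdw', hdv']
    field_simp
  · -- volume bound
    obtain ⟨t₁, ht₁, hc₁⟩ := covN_extract hN₁
    obtain ⟨t₂, ht₂, hc₂⟩ := covN_extract hN₂
    have ht₁u : ⇑u '' B₁ ⊆ ⋃ x ∈ t₁.image ⇑u, x +ᵥ (⇑u '' (⇑w '' E)) := by
      rintro z ⟨a, ha, rfl⟩
      have hmem := ht₁ ha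
      simp only [Set.mem_iUnion] at hmem ⊢
      obtain ⟨x, hx, b, hb, rfl⟩ := hmem
      refine ⟨u x, Finset.mem_image_of_mem _ hx, u b, ⟨b, hb, rfl⟩, ?_⟩
      simp [vadd_eq_add, map_add]
    -- identification of the ellipsoid sum
    have himg1 : ⇑u '' (⇑w '' E) = ⇑v '' (α • E) := by
      rw [← Set.image_comp]
      have hcomp : (⇑u ∘ ⇑w) = ⇑v ∘ (fun x : Fin n → ℝ => α • x) := by
        funext x
        simp only [Function.comp_apply, hudef, LinearEquiv.trans_apply,
          LinearEquiv.symm_apply_apply]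
        rfl
      rw [hcomp, Set.image_comp, Set.image_smul]
    have hsum : α • E + E = (α + 1) • E := by
      have h := (euclBall_convex n).add_smul hα0.le zero_le_one
      rw [one_smul] at h
      exact h.symm
    have himg2 : ⇑u '' (⇑w '' E) + ⇑v '' E = ⇑v '' ((α + 1) • E) := by
      rw [himg1, ← Set.image_add, hsum]
    have hV : volume (⇑v '' ((α + 1) • E)) = ENNReal.ofReal ((α + 1) ^ n) * volume B₂ := by
      rw [vol_image, vol_smul, abs_of_nonneg (by positivity : (0:ℝ) ≤ (α + 1) ^ n), hv]
      ring
    have key : volume (⇑u '' B₁ + B₂) ≤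
        ENNReal.ofReal (C₀ ^ n) *
          (ENNReal.ofReal (C₀ ^ n) * (ENNReal.ofReal ((α + 1) ^ n) * volume B₂)) := by
      have s1 : volume (⇑u '' B₁ + B₂) ≤
          ((t₁.image ⇑u).card : ℝ≥0∞) * volume (⇑u '' (⇑w '' E) + B₂) :=
        cover_vol _ _ ht₁u
      have s2 : volume (⇑u '' (⇑w '' E) + B₂) ≤
          (t₂.card : ℝ≥0∞) * volume (⇑u '' (⇑w '' E) + ⇑v '' E) := by
        rw [add_comm (⇑u '' (⇑w '' E)) B₂]
        calc volume (B₂ + ⇑u '' (⇑w '' E))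
            ≤ (t₂.card : ℝ≥0∞) * volume (⇑v '' E + ⇑u '' (⇑w '' E)) := cover_vol _ _ ht₂
          _ = (t₂.card : ℝ≥0∞) * volume (⇑u '' (⇑w '' E) + ⇑v '' E) := by
              rw [add_comm (⇑v '' E)]
      have hcard : ((t₁.image ⇑u).card : ℝ≥0∞) ≤ ENNReal.ofReal (C₀ ^ n) :=
        le_trans (by exact_mod_cast Finset.card_image_le) hc₁
      calc volume (⇑u '' B₁ + B₂)
          ≤ ((t₁.image ⇑u).card : ℝ≥0∞) * volume (⇑u '' (⇑w '' E) + B₂) := s1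
        _ ≤ ENNReal.ofReal (C₀ ^ n) * volume (⇑u '' (⇑w '' E) + B₂) :=
            mul_le_mul' hcard le_rfl
        _ ≤ ENNReal.ofReal (C₀ ^ n) *
              ((t₂.card : ℝ≥0∞) * volume (⇑u '' (⇑w '' E) + ⇑v '' E)) :=
            mul_le_mul' le_rfl s2
        _ ≤ ENNReal.ofReal (C₀ ^ n) *
              (ENNReal.ofReal (C₀ ^ n) * volume (⇑u '' (⇑w '' E) + ⇑v '' E)) :=
            mul_le_mul' le_rfl (mul_le_mul' hc₂ le_rfl)
        _ = ENNReal.ofReal (C₀ ^ n) *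
              (ENNReal.ofReal (C₀ ^ n) * (ENNReal.ofReal ((α + 1) ^ n) * volume B₂)) := by
            rw [himg2, hV]
    set K := C₀ ^ n * (C₀ ^ n * (α + 1) ^ n) with hKdef
    have hK0 : (0 : ℝ) ≤ K := by positivity
    have key2 : (volume (⇑u '' B₁ + B₂)).toReal ≤ K * a₂ := by
      have hrhs : ENNReal.ofReal (C₀ ^ n) *
          (ENNReal.ofReal (C₀ ^ n) * (ENNReal.ofReal ((α + 1) ^ n) * volume B₂))
          = ENNReal.ofReal K * volume B₂ := by
        rw [hKdef, ENNReal.ofReal_mul (by positivity), ENNReal.ofReal_mul (by positivity)]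
        ring
      rw [hrhs] at key
      have hne : ENNReal.ofReal K * volume B₂ ≠ ⊤ :=
        ENNReal.mul_ne_top ENNReal.ofReal_ne_top hb₂T
      have := ENNReal.toReal_mono hne key
      rwa [ENNReal.toReal_mul, ENNReal.toReal_ofReal hK0] at this
    have h1n : (1 : ℝ) / n = ((n : ℝ))⁻¹ := one_div _
    have hα1 : α * a₂ ^ ((n : ℝ))⁻¹ = a₁ ^ ((n : ℝ))⁻¹ := by
      rw [hαdef, ← Real.mul_rpow (by positivity) ha₂0.le, div_mul_cancel₀ _ ha₂0.ne']
    have hfin : (K * a₂) ^ ((1 : ℝ) / n) =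
        C₀ ^ 2 * (a₁ ^ ((1 : ℝ) / n) + a₂ ^ ((1 : ℝ) / n)) := by
      rw [h1n, hKdef]
      rw [Real.mul_rpow (by positivity) ha₂0.le,
        Real.mul_rpow (by positivity) (by positivity),
        Real.mul_rpow (by positivity) (by positivity),
        Real.pow_rpow_inv_natCast hC₀pos.le hn.ne',
        Real.pow_rpow_inv_natCast (by positivity : (0:ℝ) ≤ α + 1) hn.ne']
      rw [← hα1]
      ring
    calc (volume (⇑u '' B₁ + B₂)).toReal ^ ((1 : ℝ) / n)
        ≤ (K * a₂) ^ ((1 : ℝ) / n) :=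
          Real.rpow_le_rpow ENNReal.toReal_nonneg key2 (by positivity)
      _ = C₀ ^ 2 * (a₁ ^ ((1 : ℝ) / n) + a₂ ^ ((1 : ℝ) / n)) := hfin
end
end
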